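/- arXiv:1204.1855 — 2 statements merged into one kernel-verified Lean document; each statement's English description precedes it below -/
import Mathlib

section
/- If a finite root system Δ splinters as (Δ₁, Δ₂), i.e. Δ is the disjoint union of the images of two embeddings φ₁ : Δ₁ ↪ Δ and φ₂ : Δ₂ ↪ Δ, then the rank of Δ is at most the rank of Δ₁ plus the rank of Δ₂ (so in terms of the associated reductive algebras, rank 𝔤 ≤ rank 𝔞 + rank 𝔰). -/
open scoped RealInnerProductSpace

/-- A finite reduced crystallographic root system, given as a finite set of
vectors in a real inner product space. -/
structure IsRootSystem {V : Type*} [NormedAddCommGroup V] [InnerProductSpace ℝ V]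
    (Δ : Finset V) : Prop where
  zero_not_mem : (0 : V) ∉ Δ
  neg_mem : ∀ α ∈ Δ, -α ∈ Δ
  reflect_mem : ∀ α ∈ Δ, ∀ β ∈ Δ, β - (2 * ⟪β, α⟫ / ⟪α, α⟫) • α ∈ Δ
  crystallographic : ∀ α ∈ Δ, ∀ β ∈ Δ, ∃ n : ℤ, 2 * ⟪β, α⟫ / ⟪α, α⟫ = (n : ℝ)
  reduced : ∀ α ∈ Δ, ∀ t : ℝ, t • α ∈ Δ → t = 1 ∨ t = -1

/-- The rank of a root system: the dimension of its real linear span. -/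
noncomputable def rootRank {V : Type*} [NormedAddCommGroup V] [InnerProductSpace ℝ V]
    (Δ : Finset V) : ℕ :=
  Module.finrank ℝ (Submodule.span ℝ (Δ : Set V))

/-- A generic vector: one whose inner product with every member of a finite set of
nonzero vectors is nonzero. -/
lemma RootAux.exists_generic {V : Type*} [NormedAddCommGroup V] [InnerProductSpace ℝ V]
    (S : Finset V) (hS : (0:V) ∉ S) : ∃ w : V, ∀ v ∈ S, ⟪w, v⟫ ≠ 0 := by
  classical
  induction S using Finset.induction with
  | empty => exact ⟨0, by simp⟩
  | @insert v S hv ih =>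
    obtain ⟨w, hw⟩ := ih (fun h => hS (Finset.mem_insert_of_mem h))
    have hv0 : v ≠ 0 := fun h => hS (h ▸ Finset.mem_insert_self v S)
    have hvv : (0:ℝ) < ⟪v, v⟫ := by
      rcases lt_or_ge 0 ⟪v,v⟫ with h'|h'
      · exact h'
      · exact absurd (real_inner_self_nonpos.mp h') hv0
    obtain ⟨t, ht⟩ := Infinite.exists_notMem_finset
      ((insert v S).image (fun u => -⟪w, u⟫ / ⟪v, u⟫))
    refine ⟨w + t • v, ?_⟩
    intro u hu
    have key : ⟪w + t • v, u⟫ = ⟪w, u⟫ + t * ⟪v, u⟫ := by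
      rw [inner_add_left, real_inner_smul_left]
    rw [key]
    by_cases hvu : ⟪v, u⟫ = 0
    · rw [hvu, mul_zero, add_zero]
      rcases Finset.mem_insert.mp hu with rfl | hu'
      · exact absurd hvu (ne_of_gt hvv)
      · exact hw u hu'
    · intro hzero
      apply ht
      refine Finset.mem_image.mpr ⟨u, hu, ?_⟩
      field_simp
      linarith

/-- Vectors with pairwise nonpositive inner products, all lying strictly on one side of
a hyperplane, are linearly independent. -/
lemma RootAux.obtuse_linearIndependent {V : Type*} [NormedAddCommGroup V]
    [InnerProductSpace ℝ V]
    (S : Finset V) (w : V) (hpos : ∀ v ∈ S, 0 < ⟪w, v⟫)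
    (hobtuse : ∀ v ∈ S, ∀ u ∈ S, v ≠ u → ⟪v, u⟫ ≤ 0) :
    LinearIndependent ℝ ((↑) : S → V) := by
  classical
  rw [Fintype.linearIndependent_iff]
  intro g hg
  set P : Finset S := Finset.univ.filter (fun i => 0 < g i) with hP
  set N : Finset S := Finset.univ.filter (fun i => g i < 0) with hN
  have hPN : ∀ i ∈ P, ∀ j ∈ N, ((i:V) ≠ (j:V)) := by
    intro i hi j hj h
    have hgi : 0 < g i := (Finset.mem_filter.mp hi).2
    have hgj : g j < 0 := (Finset.mem_filter.mp hj).2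
    have : i = j := Subtype.coe_injective h
    rw [this] at hgi; linarith
  have hsplit : (∑ i ∈ P, g i • (i : V)) + (∑ i ∈ N, g i • (i : V)) = 0 := by
    rw [← hg, ← Finset.sum_filter_add_sum_filter_not Finset.univ (fun i => 0 < g i)]
    congr 1
    refine Finset.sum_subset ?_ ?_
    · intro i hi
      simp only [hN, Finset.mem_filter, Finset.mem_univ, true_and] at hi ⊢
      exact not_lt.mpr hi.le
    · intro i hi hni
      simp only [hN, Finset.mem_filter, Finset.mem_univ, true_and] at hi hni
      rw [le_antisymm (not_lt.mp hi) (not_lt.mp hni), zero_smul]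
  set u : V := ∑ i ∈ P, g i • (i : V) with hu
  have hueq : u = - ∑ i ∈ N, g i • (i : V) := by
    linear_combination (norm := module) hsplit
  have huu : ⟪u, u⟫ ≤ 0 := by
    nth_rewrite 2 [hueq]
    rw [inner_neg_right, hu, sum_inner, ← Finset.sum_neg_distrib]
    apply Finset.sum_nonpos
    intro i hi
    rw [inner_sum, ← Finset.sum_neg_distrib]
    apply Finset.sum_nonpos
    intro j hj
    rw [real_inner_smul_left, real_inner_smul_right]
    have hgi : 0 < g i := (Finset.mem_filter.mp hi).2
    have hgj : g j < 0 := (Finset.mem_filter.mp hj).2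
    have hip : ⟪(i:V), (j:V)⟫ ≤ 0 := hobtuse i i.2 j j.2 (hPN i hi j hj)
    have h1 : 0 ≤ g j * ⟪(i:V), (j:V)⟫ := by nlinarith
    have h2 : 0 ≤ g i * (g j * ⟪(i:V), (j:V)⟫) := mul_nonneg hgi.le h1
    linarith
  have hu0 : u = 0 := real_inner_self_nonpos.mp huu
  have hPempty : P = ∅ := by
    by_contra hne
    obtain ⟨i, hi⟩ := Finset.nonempty_of_ne_empty hne
    have hwu : (0:ℝ) < ⟪w, u⟫ := by
      rw [hu, inner_sum]
      refine Finset.sum_pos ?_ ⟨i, hi⟩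
      intro j hj
      rw [real_inner_smul_right]
      exact mul_pos (Finset.mem_filter.mp hj).2 (hpos j j.2)
    rw [hu0, inner_zero_right] at hwu
    exact lt_irrefl 0 hwu
  have hNu : (∑ j ∈ N, g j • (j : V)) = 0 := by
    rw [hu0] at hueq
    exact neg_eq_zero.mp hueq.symm
  have hNempty : N = ∅ := by
    by_contra hne
    obtain ⟨i, hi⟩ := Finset.nonempty_of_ne_empty hne
    have h0 : ∑ j ∈ N, g j * ⟪w, (j:V)⟫ = 0 := by
      have := congrArg (fun x => ⟪w, x⟫) hNu
      simpa [inner_sum, real_inner_smul_right] using this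
    have hwu : (0:ℝ) < ∑ j ∈ N, -(g j * ⟪w, (j:V)⟫) := by
      refine Finset.sum_pos ?_ ⟨i, hi⟩
      intro j hj
      have := (Finset.mem_filter.mp hj).2
      have := hpos j j.2
      nlinarith
    rw [Finset.sum_neg_distrib, h0, neg_zero] at hwu
    exact lt_irrefl 0 hwu
  intro i
  by_contra hgi
  rcases lt_or_gt_of_ne hgi with h | h
  · have : i ∈ N := Finset.mem_filter.mpr ⟨Finset.mem_univ i, h⟩
    rw [hNempty] at this; exact absurd this (Finset.notMem_empty i)
  · have : i ∈ P := Finset.mem_filter.mpr ⟨Finset.mem_univ i, h⟩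
    rw [hPempty] at this; exact absurd this (Finset.notMem_empty i)

/-- A finite set of vectors that is closed under negation and avoids a hyperplane spans
a subspace of dimension at most half its cardinality. -/
lemma RootAux.half_card_span {V : Type*} [NormedAddCommGroup V] [InnerProductSpace ℝ V]
    [FiniteDimensional ℝ V]
    (C : Finset V) (w : V) (hw : ∀ v ∈ C, ⟪w, v⟫ ≠ 0)
    (hneg : ∀ v ∈ C, -v ∈ C) :
    2 * Module.finrank ℝ (Submodule.span ℝ (C : Set V)) ≤ C.card := by
  classical
  set Cp := C.filter (fun v => 0 < ⟪w, v⟫) with hCp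
  set Cn := C.filter (fun v => ⟪w, v⟫ < 0) with hCn
  have hsub : (C : Set V) ⊆ Submodule.span ℝ (Cp : Set V) := by
    intro v hv
    have hvC : v ∈ C := hv
    rcases lt_trichotomy (0:ℝ) ⟪w, v⟫ with h | h | h
    · exact Submodule.subset_span (by simp [hCp, Finset.mem_filter, hvC, h])
    · exact absurd h.symm (hw v hvC)
    · have hnv : -v ∈ Cp := by
        refine Finset.mem_filter.mpr ⟨hneg v hvC, ?_⟩
        rw [inner_neg_right]; linarith
      have : (-v : V) ∈ Submodule.span ℝ (Cp : Set V) := Submodule.subset_span hnv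
      have := Submodule.neg_mem _ this
      simpa using this
  have hle : Submodule.span ℝ (C : Set V) ≤ Submodule.span ℝ (Cp : Set V) :=
    Submodule.span_le.mpr hsub
  have h1 : Module.finrank ℝ (Submodule.span ℝ (C : Set V)) ≤ Cp.card := by
    calc Module.finrank ℝ (Submodule.span ℝ (C : Set V))
        ≤ Module.finrank ℝ (Submodule.span ℝ (Cp : Set V)) := by
          apply Submodule.finrank_mono hle
      _ ≤ Cp.card := finrank_span_finset_le_card Cp
  have hcards : Cp.card = Cn.card := by
    apply Finset.card_bij (fun v _ => -v)
    · intro v hv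
      rcases Finset.mem_filter.mp hv with ⟨hvC, hvp⟩
      refine Finset.mem_filter.mpr ⟨hneg v hvC, ?_⟩
      rw [inner_neg_right]; linarith
    · intro a ha b hb hab
      have := congrArg Neg.neg hab; simpa using this
    · intro b hb
      rcases Finset.mem_filter.mp hb with ⟨hbC, hbn⟩
      refine ⟨-b, ?_, by simp⟩
      refine Finset.mem_filter.mpr ⟨hneg b hbC, ?_⟩
      rw [inner_neg_right]; linarith
  have hdisjoint : Disjoint Cp Cn := by
    rw [Finset.disjoint_left]
    intro v hv hv'
    have h1 := (Finset.mem_filter.mp hv).2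
    have h2 := (Finset.mem_filter.mp hv').2
    linarith
  have hunion : Cp ∪ Cn ⊆ C := by
    intro v hv
    rcases Finset.mem_union.mp hv with h | h
    · exact (Finset.mem_filter.mp h).1
    · exact (Finset.mem_filter.mp h).1
  have hcard : Cp.card + Cn.card ≤ C.card := by
    rw [← Finset.card_union_of_disjoint hdisjoint]
    exact Finset.card_le_card hunion
  omega

lemma RootAux.inner_self_pos' {V : Type*} [NormedAddCommGroup V] [InnerProductSpace ℝ V]
    {Δ : Finset V} (h : IsRootSystem Δ) {α : V} (hα : α ∈ Δ) : 0 < ⟪α, α⟫ := by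
  rcases lt_or_ge 0 ⟪α,α⟫ with h'|h'
  · exact h'
  · exact absurd (real_inner_self_nonpos.mp h') (fun h0 => h.zero_not_mem (h0 ▸ hα))

/-- If two distinct roots have positive inner product, their difference is a root. -/
lemma RootAux.root_sub_mem {V : Type*} [NormedAddCommGroup V] [InnerProductSpace ℝ V]
    {Δ : Finset V} (h : IsRootSystem Δ) {α β : V} (hα : α ∈ Δ) (hβ : β ∈ Δ)
    (hne : β ≠ α) (hpos : 0 < ⟪β, α⟫) : β - α ∈ Δ := by
  have hαα : 0 < ⟪α, α⟫ := RootAux.inner_self_pos' h hα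
  have hββ : 0 < ⟪β, β⟫ := RootAux.inner_self_pos' h hβ
  obtain ⟨n, hn⟩ := h.crystallographic α hα β hβ
  obtain ⟨m, hm⟩ := h.crystallographic β hβ α hα
  have hn' : 2 * ⟪β, α⟫ = n * ⟪α, α⟫ := by
    field_simp at hn; linarith
  have hm' : 2 * ⟪α, β⟫ = m * ⟪β, β⟫ := by
    field_simp at hm; linarith
  have hba : ⟪α, β⟫ = ⟪β, α⟫ := real_inner_comm β α
  have hn1 : 1 ≤ n := by
    by_contra hc
    push_neg at hc
    have : (n:ℝ) ≤ 0 := by exact_mod_cast Int.lt_add_one_iff.mp hc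
    nlinarith
  have hm1 : 1 ≤ m := by
    by_contra hc
    push_neg at hc
    have : (m:ℝ) ≤ 0 := by exact_mod_cast Int.lt_add_one_iff.mp hc
    nlinarith
  have hkey : n = 1 ∨ m = 1 := by
    by_contra hc
    push_neg at hc
    have hn2 : (2:ℝ) ≤ n := by exact_mod_cast (by omega : (2:ℤ) ≤ n)
    have hm2 : (2:ℝ) ≤ m := by exact_mod_cast (by omega : (2:ℤ) ≤ m)
    have h1 : ⟪α, α⟫ ≤ ⟪β, α⟫ := by nlinarith
    have h2 : ⟪β, β⟫ ≤ ⟪β, α⟫ := by nlinarith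
    have h3 : ⟪β - α, β - α⟫ ≤ 0 := by
      have : ⟪β - α, β - α⟫ = ⟪β, β⟫ - 2 * ⟪β, α⟫ + ⟪α, α⟫ := by
        rw [inner_sub_left, inner_sub_right, inner_sub_right, hba]
        ring
      linarith
    have : β - α = 0 := real_inner_self_nonpos.mp h3
    exact hne (by rwa [sub_eq_zero] at this)
  rcases hkey with h1 | h1
  · have := h.reflect_mem α hα β hβ
    rw [hn, h1] at this
    simpa using this
  · have := h.reflect_mem β hβ α hα
    rw [hm, h1] at this
    have h2 := h.neg_mem _ this
    simpa using h2

/-- The main per-stem lemma: from a root system `Δ'` and an "embedding-like" map `φ`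
(additive on root triples), we extract the set `Pg` of good indecomposable positive
roots and the set `Bd` of bad roots (those belonging to `A₁`-components) so that the
image of every good root lies in the span of the image of `Pg`, together with the
crucial counting estimate. -/
lemma RootAux.stem_bound {V' W : Type*} [DecidableEq W]
    [NormedAddCommGroup V'] [InnerProductSpace ℝ V'] [FiniteDimensional ℝ V']
    [NormedAddCommGroup W] [InnerProductSpace ℝ W]
    (Δ' : Finset V') (h : IsRootSystem Δ') (φ : V' → W)
    (hadd : ∀ α ∈ Δ', ∀ β ∈ Δ', α + β ∈ Δ' → φ (α + β) = φ α + φ β) :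
    ∃ Pg Bd : Finset V', Pg ⊆ Δ' ∧ Bd ⊆ Δ' ∧
      (∀ α ∈ Bd, ∀ β ∈ Δ', α + β ∉ Δ') ∧
      (∀ α ∈ Δ', α ∉ Bd → φ α ∈ Submodule.span ℝ ((Pg.image φ : Finset W) : Set W)) ∧
      2 * Pg.card + Bd.card ≤ 2 * Module.finrank ℝ (Submodule.span ℝ ((Δ' : Set V'))) := by
  classical
  obtain ⟨w, hw⟩ := RootAux.exists_generic Δ' h.zero_not_mem
  set pos := Δ'.filter (fun v => 0 < ⟪w, v⟫) with hposdef
  set Bad := Δ'.filter (fun α => ∀ β ∈ Δ', α + β ∉ Δ') with hBaddef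
  set Ind := pos.filter (fun β => ¬ ∃ γ ∈ pos, ∃ δ ∈ pos, γ + δ = β) with hInddef
  have hposΔ : pos ⊆ Δ' := Finset.filter_subset _ _
  have hIndpos : Ind ⊆ pos := Finset.filter_subset _ _
  have hIndΔ : Ind ⊆ Δ' := fun x hx => hposΔ (hIndpos hx)
  have hBadΔ : Bad ⊆ Δ' := Finset.filter_subset _ _
  have hBadspec : ∀ α ∈ Bad, ∀ β ∈ Δ', α + β ∉ Δ' := by
    intro α hα
    exact (Finset.mem_filter.mp hα).2
  have hnotBad : ∀ α ∈ Δ', α ∉ Bad → ∃ β ∈ Δ', α + β ∈ Δ' := by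
    intro α hα hnb
    by_contra hc
    push_neg at hc
    exact hnb (Finset.mem_filter.mpr ⟨hα, fun β hβ => hc β hβ⟩)
  refine ⟨Ind \ Bad, Bad, fun x hx => hIndΔ (Finset.mem_sdiff.mp hx).1, hBadΔ, hBadspec, ?_, ?_⟩
  · -- span claim
    set M := Submodule.span ℝ ((((Ind \ Bad).image φ : Finset W)) : Set W) with hM
    have hbase : ∀ β ∈ Ind, β ∉ Bad → φ β ∈ M := by
      intro β hβ hnb
      apply Submodule.subset_span
      exact_mod_cast Finset.mem_image_of_mem φ (Finset.mem_sdiff.mpr ⟨hβ, hnb⟩)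
    have hkey : ∀ n : ℕ, ∀ β ∈ pos, β ∉ Bad →
        (pos.filter (fun γ => ⟪w, γ⟫ < ⟪w, β⟫)).card ≤ n → φ β ∈ M := by
      intro n
      induction n with
      | zero =>
        intro β hβ hnb hcard
        by_cases hβI : β ∈ Ind
        · exact hbase β hβI hnb
        · exfalso
          have hdec : ∃ γ ∈ pos, ∃ δ ∈ pos, γ + δ = β := by
            by_contra hc
            exact hβI (Finset.mem_filter.mpr ⟨hβ, hc⟩)
          obtain ⟨γ, hγ, δ, hδ, heq⟩ := hdec
          have hwδ : 0 < ⟪w, δ⟫ := (Finset.mem_filter.mp hδ).2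
          have hwγβ : ⟪w, γ⟫ < ⟪w, β⟫ := by
            have : ⟪w, β⟫ = ⟪w, γ⟫ + ⟪w, δ⟫ := by rw [← heq, inner_add_right]
            linarith
          have : γ ∈ pos.filter (fun γ => ⟪w, γ⟫ < ⟪w, β⟫) :=
            Finset.mem_filter.mpr ⟨hγ, hwγβ⟩
          have := Finset.card_pos.mpr ⟨γ, this⟩
          omega
      | succ n ih =>
        intro β hβ hnb hcard
        by_cases hβI : β ∈ Ind
        · exact hbase β hβI hnb
        · have hdec : ∃ γ ∈ pos, ∃ δ ∈ pos, γ + δ = β := by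
            by_contra hc
            exact hβI (Finset.mem_filter.mpr ⟨hβ, hc⟩)
          obtain ⟨γ, hγ, δ, hδ, heq⟩ := hdec
          have hγΔ : γ ∈ Δ' := hposΔ hγ
          have hδΔ : δ ∈ Δ' := hposΔ hδ
          have hβΔ : β ∈ Δ' := hposΔ hβ
          have hsum : γ + δ ∈ Δ' := heq ▸ hβΔ
          have hφ : φ β = φ γ + φ δ := by rw [← heq]; exact hadd γ hγΔ δ hδΔ hsum
          have hγnb : γ ∉ Bad := by
            intro hb
            exact hBadspec γ hb δ hδΔ hsum
          have hδnb : δ ∉ Bad := by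
            intro hb
            have : δ + γ ∈ Δ' := by rwa [add_comm]
            exact hBadspec δ hb γ hγΔ this
          have hwγ : 0 < ⟪w, γ⟫ := (Finset.mem_filter.mp hγ).2
          have hwδ : 0 < ⟪w, δ⟫ := (Finset.mem_filter.mp hδ).2
          have hwsum : ⟪w, β⟫ = ⟪w, γ⟫ + ⟪w, δ⟫ := by rw [← heq, inner_add_right]
          have hmeas : ∀ ρ, ρ ∈ pos → 0 < ⟪w, β⟫ - ⟪w, ρ⟫ →
              (pos.filter (fun x => ⟪w, x⟫ < ⟪w, ρ⟫)).card ≤ n := by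
            intro ρ hρ hlt
            have hss : pos.filter (fun x => ⟪w, x⟫ < ⟪w, ρ⟫) ⊂
                pos.filter (fun x => ⟪w, x⟫ < ⟪w, β⟫) := by
              refine Finset.ssubset_iff_of_subset ?_ |>.mpr ?_
              · intro x hx
                rcases Finset.mem_filter.mp hx with ⟨hx1, hx2⟩
                exact Finset.mem_filter.mpr ⟨hx1, by linarith⟩
              · refine ⟨ρ, Finset.mem_filter.mpr ⟨hρ, by linarith⟩, ?_⟩
                intro hc
                exact absurd (Finset.mem_filter.mp hc).2 (lt_irrefl _)
            have := Finset.card_lt_card hss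
            omega
          have hγM : φ γ ∈ M := ih γ hγ hγnb (hmeas γ hγ (by linarith))
          have hδM : φ δ ∈ M := ih δ hδ hδnb (hmeas δ hδ (by linarith))
          rw [hφ]
          exact Submodule.add_mem _ hγM hδM
    intro α hα hnb
    rcases lt_trichotomy (0:ℝ) ⟪w, α⟫ with hs | hs | hs
    · have hαpos : α ∈ pos := Finset.mem_filter.mpr ⟨hα, hs⟩
      exact hkey _ α hαpos hnb le_rfl
    · exact absurd hs.symm (hw α hα)
    · have hnegΔ : -α ∈ Δ' := h.neg_mem α hα
      have hnegpos : -α ∈ pos := by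
        refine Finset.mem_filter.mpr ⟨hnegΔ, ?_⟩
        rw [inner_neg_right]; linarith
      obtain ⟨δ, hδ, hsum⟩ := hnotBad α hα hnb
      have hnegnb : -α ∉ Bad := by
        intro hb
        have hmem : (-α) + (α + δ) ∈ Δ' := by
          have : (-α) + (α + δ) = δ := by abel
          rw [this]; exact hδ
        exact hBadspec (-α) hb (α + δ) hsum hmem
      have hφneg : φ (-α) ∈ M := hkey _ (-α) hnegpos hnegnb le_rfl
      have hrel : φ α = - φ (-α) := by
        have hmemδ : (-α) + (α + δ) ∈ Δ' := by
          have : (-α) + (α + δ) = δ := by abel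
          rw [this]; exact hδ
        have e1 : φ ((-α) + (α + δ)) = φ (-α) + φ (α + δ) :=
          hadd (-α) hnegΔ (α + δ) hsum hmemδ
        have e2 : φ (α + δ) = φ α + φ δ := hadd α hα δ hδ hsum
        have e3 : (-α) + (α + δ) = δ := by abel
        rw [e3, e2] at e1
        have : φ (-α) + φ α = 0 := by
          have := e1
          abel_nf at this ⊢
          linear_combination (norm := abel) this.symm
        linear_combination (norm := abel) this
      rw [hrel]
      exact Submodule.neg_mem _ hφneg
  · -- counting claim
    have hobtuse : ∀ β ∈ Ind, ∀ β' ∈ Ind, β ≠ β' → ⟪β, β'⟫ ≤ 0 := by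
      intro β hβ β' hβ' hne
      by_contra hc
      push_neg at hc
      have hsub : β - β' ∈ Δ' := RootAux.root_sub_mem h (hIndΔ hβ') (hIndΔ hβ) hne hc
      have hwne := hw _ hsub
      rcases lt_trichotomy (0:ℝ) ⟪w, β - β'⟫ with hs | hs | hs
      · have hmem : β - β' ∈ pos := Finset.mem_filter.mpr ⟨hsub, hs⟩
        have : ∃ γ ∈ pos, ∃ δ ∈ pos, γ + δ = β :=
          ⟨β - β', hmem, β', hIndpos hβ', by abel⟩
        exact (Finset.mem_filter.mp hβ).2 this
      · exact hwne hs.symm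
      · have hsub' : β' - β ∈ Δ' := by
          have := h.neg_mem _ hsub
          simpa using this
        have hmem : β' - β ∈ pos := by
          refine Finset.mem_filter.mpr ⟨hsub', ?_⟩
          have : ⟪w, β' - β⟫ = - ⟪w, β - β'⟫ := by
            rw [inner_sub_right, inner_sub_right]; ring
          rw [this]; linarith
        have : ∃ γ ∈ pos, ∃ δ ∈ pos, γ + δ = β' :=
          ⟨β' - β, hmem, β, hIndpos hβ, by abel⟩
        exact (Finset.mem_filter.mp hβ').2 this
    have hLI : LinearIndependent ℝ ((↑) : Ind → V') :=
      RootAux.obtuse_linearIndependent Ind w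
        (fun v hv => (Finset.mem_filter.mp (hIndpos hv)).2) hobtuse
    have hIndcard : Ind.card ≤ Module.finrank ℝ (Submodule.span ℝ ((Δ' : Set V'))) := by
      rw [← finrank_span_finset_eq_card hLI]
      apply Submodule.finrank_mono
      apply Submodule.span_mono
      exact_mod_cast hIndΔ
    set BadPos := Bad.filter (fun v => 0 < ⟪w, v⟫) with hBPdef
    set BadNeg := Bad.filter (fun v => ⟪w, v⟫ < 0) with hBNdef
    have hBadneg : ∀ α ∈ Bad, -α ∈ Bad := by
      intro α hα
      refine Finset.mem_filter.mpr ⟨h.neg_mem α (hBadΔ hα), ?_⟩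
      intro β hβ hmem
      have : α + ((-α) + β) ∈ Δ' := by
        have : α + ((-α) + β) = β := by abel
        rw [this]; exact hβ
      exact hBadspec α hα ((-α) + β) hmem this
    have hBPN : BadPos.card = BadNeg.card := by
      apply Finset.card_bij (fun v _ => -v)
      · intro v hv
        rcases Finset.mem_filter.mp hv with ⟨hvB, hvp⟩
        refine Finset.mem_filter.mpr ⟨hBadneg v hvB, ?_⟩
        rw [inner_neg_right]; linarith
      · intro a ha b hb hab
        have := congrArg Neg.neg hab; simpa using this
      · intro b hb
        rcases Finset.mem_filter.mp hb with ⟨hbB, hbn⟩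
        refine ⟨-b, ?_, by simp⟩
        refine Finset.mem_filter.mpr ⟨hBadneg b hbB, ?_⟩
        rw [inner_neg_right]; linarith
    have hBadsplit : Bad.card = BadPos.card + BadNeg.card := by
      rw [hBPdef, hBNdef]
      rw [← Finset.card_filter_add_card_filter_not (s := Bad)
        (p := fun v => 0 < ⟪w, v⟫)]
      congr 1
      apply Finset.card_nbij id
      · intro a ha
        rcases Finset.mem_filter.mp ha with ⟨haB, han⟩
        have := hw a (hBadΔ haB)
        refine Finset.mem_filter.mpr ⟨haB, ?_⟩
        simp only [id]
        rcases lt_trichotomy (0:ℝ) ⟪w, a⟫ with hs | hs | hs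
        · exact absurd hs han
        · exact absurd hs.symm this
        · exact hs
      · exact Function.Injective.injOn (fun a b hab => hab)
      · intro b hb
        rcases Finset.mem_filter.mp hb with ⟨hbB, hbn⟩
        exact ⟨b, Finset.mem_filter.mpr ⟨hbB, by intro hc; linarith⟩, rfl⟩
    have hBPInd : BadPos ⊆ Ind := by
      intro α hα
      rcases Finset.mem_filter.mp hα with ⟨hαB, hαp⟩
      refine Finset.mem_filter.mpr ⟨Finset.mem_filter.mpr ⟨hBadΔ hαB, hαp⟩, ?_⟩
      rintro ⟨γ, hγ, δ, hδ, heq⟩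
      have hγΔ : γ ∈ Δ' := hposΔ hγ
      have hnegγ : -γ ∈ Δ' := h.neg_mem γ hγΔ
      have : α + (-γ) ∈ Δ' := by
        have : α + (-γ) = δ := by rw [← heq]; abel
        rw [this]; exact hposΔ hδ
      exact hBadspec α hαB (-γ) hnegγ this
    have hIndBad : Ind ∩ Bad = BadPos := by
      ext x
      simp only [Finset.mem_inter, hBPdef, Finset.mem_filter]
      constructor
      · rintro ⟨hxI, hxB⟩
        exact ⟨hxB, (Finset.mem_filter.mp (hIndpos hxI)).2⟩
      · rintro ⟨hxB, hxp⟩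
        exact ⟨hBPInd (Finset.mem_filter.mpr ⟨hxB, hxp⟩), hxB⟩
    have hsdiff : (Ind \ Bad).card + BadPos.card = Ind.card := by
      rw [← hIndBad]
      rw [add_comm]
      exact Finset.card_inter_add_card_sdiff Ind Bad
    omega

/-- If a root system `Δ` splinters as `(Δ₁, Δ₂)`, i.e. `Δ` is the disjoint union of
the images of two embeddings `φ₁ : Δ₁ ↪ Δ` and `φ₂ : Δ₂ ↪ Δ` (injective maps of roots
commuting with the vector composition law), then
`rank Δ ≤ rank Δ₁ + rank Δ₂` (i.e. `rank 𝔤 ≤ rank 𝔞 + rank 𝔰`). -/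
theorem splint_rank_le
    {V V₁ V₂ : Type*}
    [NormedAddCommGroup V] [InnerProductSpace ℝ V] [FiniteDimensional ℝ V]
    [NormedAddCommGroup V₁] [InnerProductSpace ℝ V₁] [FiniteDimensional ℝ V₁]
    [NormedAddCommGroup V₂] [InnerProductSpace ℝ V₂] [FiniteDimensional ℝ V₂]
    (Δ : Finset V) (Δ₁ : Finset V₁) (Δ₂ : Finset V₂)
    (hΔ : IsRootSystem Δ) (hΔ₁ : IsRootSystem Δ₁) (hΔ₂ : IsRootSystem Δ₂)
    -- the two embeddings of root systems
    (φ₁ : V₁ → V) (φ₂ : V₂ → V)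
    (hinj₁ : Set.InjOn φ₁ (Δ₁ : Set V₁)) (hinj₂ : Set.InjOn φ₂ (Δ₂ : Set V₂))
    (hadd₁ : ∀ α ∈ Δ₁, ∀ β ∈ Δ₁, α + β ∈ Δ₁ → φ₁ (α + β) = φ₁ α + φ₁ β)
    (hadd₂ : ∀ α ∈ Δ₂, ∀ β ∈ Δ₂, α + β ∈ Δ₂ → φ₂ (α + β) = φ₂ α + φ₂ β)
    -- `Δ` is the disjoint union of the images of `φ₁` and `φ₂`
    (hunion : (Δ : Set V) = φ₁ '' (Δ₁ : Set V₁) ∪ φ₂ '' (Δ₂ : Set V₂))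
    (hdisj : Disjoint (φ₁ '' (Δ₁ : Set V₁)) (φ₂ '' (Δ₂ : Set V₂)))
    -- neither rank of a stem exceeds the rank of `Δ`
    (hrank₁ : rootRank Δ₁ ≤ rootRank Δ) (hrank₂ : rootRank Δ₂ ≤ rootRank Δ) :
    rootRank Δ ≤ rootRank Δ₁ + rootRank Δ₂ := by
  classical
  obtain ⟨Pg₁, Bd₁, hPg₁Δ, hBd₁Δ, hBd₁spec, hspan₁, hcount₁⟩ :=
    RootAux.stem_bound Δ₁ hΔ₁ φ₁ hadd₁
  obtain ⟨Pg₂, Bd₂, hPg₂Δ, hBd₂Δ, hBd₂spec, hspan₂, hcount₂⟩ :=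
    RootAux.stem_bound Δ₂ hΔ₂ φ₂ hadd₂
  have himg₁ : ∀ α ∈ Δ₁, φ₁ α ∈ Δ := by
    intro α hα
    have : φ₁ α ∈ (Δ : Set V) := by
      rw [hunion]; exact Or.inl ⟨α, by exact_mod_cast hα, rfl⟩
    exact_mod_cast this
  have himg₂ : ∀ α ∈ Δ₂, φ₂ α ∈ Δ := by
    intro α hα
    have : φ₂ α ∈ (Δ : Set V) := by
      rw [hunion]; exact Or.inr ⟨α, by exact_mod_cast hα, rfl⟩
    exact_mod_cast this
  set PU : Finset V := Pg₁.image φ₁ ∪ Pg₂.image φ₂ with hPU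
  set U := Submodule.span ℝ ((PU : Finset V) : Set V) with hU
  have hU1 : Submodule.span ℝ ((Pg₁.image φ₁ : Finset V) : Set V) ≤ U := by
    rw [hU, hPU]
    exact Submodule.span_mono (by exact_mod_cast (Finset.subset_union_left))
  have hU2 : Submodule.span ℝ ((Pg₂.image φ₂ : Finset V) : Set V) ≤ U := by
    rw [hU, hPU]
    exact Submodule.span_mono (by exact_mod_cast (Finset.subset_union_right))
  set Bst : Finset V := Bd₁.image φ₁ ∪ Bd₂.image φ₂ with hBst
  set C : Finset V := Bst.filter (fun x => -x ∈ Bst) with hC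
  have hBstΔ : Bst ⊆ Δ := by
    intro x hx
    rcases Finset.mem_union.mp hx with h | h
    · obtain ⟨a, ha, rfl⟩ := Finset.mem_image.mp h
      exact himg₁ a (hBd₁Δ ha)
    · obtain ⟨a, ha, rfl⟩ := Finset.mem_image.mp h
      exact himg₂ a (hBd₂Δ ha)
  have hCΔ : C ⊆ Δ := fun x hx => hBstΔ (Finset.mem_filter.mp hx).1
  have hCneg : ∀ x ∈ C, -x ∈ C := by
    intro x hx
    rcases Finset.mem_filter.mp hx with ⟨hx1, hx2⟩
    refine Finset.mem_filter.mpr ⟨hx2, by simpa using hx1⟩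
  obtain ⟨w, hw⟩ := RootAux.exists_generic Δ hΔ.zero_not_mem
  have hChalf : 2 * Module.finrank ℝ (Submodule.span ℝ (C : Set V)) ≤ C.card :=
    RootAux.half_card_span C w (fun v hv => hw v (hCΔ hv)) hCneg
  set SC := Submodule.span ℝ ((C : Finset V) : Set V) with hSC
  -- the key inclusion
  have hincl : Submodule.span ℝ ((Δ : Finset V) : Set V) ≤ U ⊔ SC := by
    rw [Submodule.span_le]
    intro γ hγ
    rw [hunion] at hγ
    have main : γ ∈ U ⊔ SC := by
      rcases hγ with ⟨α, hα, rfl⟩ | ⟨α, hα, rfl⟩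
      · have hαΔ : α ∈ Δ₁ := by exact_mod_cast hα
        by_cases hb : α ∈ Bd₁
        · have hγB : φ₁ α ∈ Bst :=
            Finset.mem_union_left _ (Finset.mem_image_of_mem φ₁ hb)
          by_cases hc : -φ₁ α ∈ Bst
          · have : φ₁ α ∈ C := Finset.mem_filter.mpr ⟨hγB, hc⟩
            exact Submodule.mem_sup_right (Submodule.subset_span (by exact_mod_cast this))
          · have hnγ : -φ₁ α ∈ (Δ : Set V) := by
              have := hΔ.neg_mem _ (himg₁ α hαΔ)
              exact_mod_cast this
            rw [hunion] at hnγ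
            rcases hnγ with ⟨β, hβ, hEq⟩ | ⟨β, hβ, hEq⟩
            · have hβΔ : β ∈ Δ₁ := by exact_mod_cast hβ
              have hβnb : β ∉ Bd₁ := by
                intro hbb
                exact hc (hEq ▸ Finset.mem_union_left _ (Finset.mem_image_of_mem φ₁ hbb))
              have : φ₁ β ∈ U := hU1 (hspan₁ β hβΔ hβnb)
              have h2 : φ₁ α = -(φ₁ β) := by rw [hEq]; simp
              rw [h2]
              exact Submodule.mem_sup_left (Submodule.neg_mem _ this)
            · have hβΔ : β ∈ Δ₂ := by exact_mod_cast hβ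
              have hβnb : β ∉ Bd₂ := by
                intro hbb
                exact hc (hEq ▸ Finset.mem_union_right _ (Finset.mem_image_of_mem φ₂ hbb))
              have : φ₂ β ∈ U := hU2 (hspan₂ β hβΔ hβnb)
              have h2 : φ₁ α = -(φ₂ β) := by rw [hEq]; simp
              rw [h2]
              exact Submodule.mem_sup_left (Submodule.neg_mem _ this)
        · exact Submodule.mem_sup_left (hU1 (hspan₁ α hαΔ hb))
      · have hαΔ : α ∈ Δ₂ := by exact_mod_cast hα
        by_cases hb : α ∈ Bd₂
        · have hγB : φ₂ α ∈ Bst :=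
            Finset.mem_union_right _ (Finset.mem_image_of_mem φ₂ hb)
          by_cases hc : -φ₂ α ∈ Bst
          · have : φ₂ α ∈ C := Finset.mem_filter.mpr ⟨hγB, hc⟩
            exact Submodule.mem_sup_right (Submodule.subset_span (by exact_mod_cast this))
          · have hnγ : -φ₂ α ∈ (Δ : Set V) := by
              have := hΔ.neg_mem _ (himg₂ α hαΔ)
              exact_mod_cast this
            rw [hunion] at hnγ
            rcases hnγ with ⟨β, hβ, hEq⟩ | ⟨β, hβ, hEq⟩
            · have hβΔ : β ∈ Δ₁ := by exact_mod_cast hβ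
              have hβnb : β ∉ Bd₁ := by
                intro hbb
                exact hc (hEq ▸ Finset.mem_union_left _ (Finset.mem_image_of_mem φ₁ hbb))
              have : φ₁ β ∈ U := hU1 (hspan₁ β hβΔ hβnb)
              have h2 : φ₂ α = -(φ₁ β) := by rw [hEq]; simp
              rw [h2]
              exact Submodule.mem_sup_left (Submodule.neg_mem _ this)
            · have hβΔ : β ∈ Δ₂ := by exact_mod_cast hβ
              have hβnb : β ∉ Bd₂ := by
                intro hbb
                exact hc (hEq ▸ Finset.mem_union_right _ (Finset.mem_image_of_mem φ₂ hbb))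
              have : φ₂ β ∈ U := hU2 (hspan₂ β hβΔ hβnb)
              have h2 : φ₂ α = -(φ₂ β) := by rw [hEq]; simp
              rw [h2]
              exact Submodule.mem_sup_left (Submodule.neg_mem _ this)
        · exact Submodule.mem_sup_left (hU2 (hspan₂ α hαΔ hb))
    exact main
  have hrank : rootRank Δ ≤ Module.finrank ℝ (U ⊔ SC : Submodule ℝ V) := by
    simp only [rootRank]
    exact Submodule.finrank_mono hincl
  have hsup : Module.finrank ℝ (U ⊔ SC : Submodule ℝ V) ≤
      Module.finrank ℝ U + Module.finrank ℝ SC := by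
    have := Submodule.finrank_sup_add_finrank_inf_eq U SC
    omega
  have hUcard : Module.finrank ℝ U ≤ Pg₁.card + Pg₂.card := by
    calc Module.finrank ℝ U ≤ PU.card := finrank_span_finset_le_card PU
      _ ≤ (Pg₁.image φ₁).card + (Pg₂.image φ₂).card := Finset.card_union_le _ _
      _ ≤ Pg₁.card + Pg₂.card :=
        Nat.add_le_add (Finset.card_image_le) (Finset.card_image_le)
  have hCcard : C.card ≤ Bd₁.card + Bd₂.card := by
    calc C.card ≤ Bst.card := Finset.card_le_card (Finset.filter_subset _ _)
      _ ≤ (Bd₁.image φ₁).card + (Bd₂.image φ₂).card := Finset.card_union_le _ _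
      _ ≤ Bd₁.card + Bd₂.card :=
        Nat.add_le_add (Finset.card_image_le) (Finset.card_image_le)
  have hfinal : 2 * rootRank Δ ≤ 2 * rootRank Δ₁ + 2 * rootRank Δ₂ := by
    simp only [rootRank] at *
    omega
  omega
end

section
/- Under a splint Δ ≈ (Δ_a, Δ_s) with Δ⁺ = Δ_a⁺ ⊔ φ(Δ_s⁺), the affinized Weyl denominators satisfy, in the ring of formal power series in q with coefficients in ℤ[V] (all infinite products converge q-adically since every factor is ≡ 1 mod q): [∏_{α∈Δ_a⁺}(1−e^{−α})]·∏_{n=1}^∞[(1−q^n)^{r_a} ∏_{α∈Δ_a}(1−q^n e^{−α})] · [∏_{β∈Δ_s⁺}(1−e^{−φ(β)})]·∏_{n=1}^∞[(1−q^n)^{r_s} ∏_{β∈Δ_s}(1−q^n e^{−φ(β)})] = [∏_{γ∈Δ⁺}(1−e^{−γ})]·∏_{n=1}^∞[(1−q^n)^{r} ∏_{γ∈Δ}(1−q^n e^{−γ})] · ∏_{n=1}^∞(1−q^n)^{r_a + r_s − r}, where r_a = rank Δ_a, r_s = rank Δ_s, r = rank Δ (and r_a + r_s ≥ r). This is the relation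 ∏_{α∈Δ̂₁⁺}(1−e^{−α})^{mult α} ∏_{β∈Δ̂₂⁺}(1−e^{−φ∘β})^{mult β} = ∏_{γ∈Δ̂⁺}(1−e^{−γ})^{mult γ} ∏_{n≥1}(1−e^{−nδ})^{r_a+r_s−r} between the denominators of the untwisted affine extensions, with q = e^{−δ}. -/
open scoped RealInnerProductSpace

/-- `Δpos` is a positive system for the root system `Δ`. -/
def IsPositiveSystem {V : Type*} [NormedAddCommGroup V] [InnerProductSpace ℝ V]
    (Δ Δpos : Finset V) : Prop :=
  Δpos ⊆ Δ ∧ (∀ α ∈ Δ, (α ∈ Δpos ↔ -α ∉ Δpos)) ∧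
    ∀ α ∈ Δpos, ∀ β ∈ Δpos, α + β ∈ Δ → α + β ∈ Δpos

/-- The formal exponential `e^v`, an element of the group algebra `ℤ[V]`. -/
noncomputable def fexp {V : Type*} [AddCommGroup V] (v : V) : AddMonoidAlgebra ℤ V :=
  AddMonoidAlgebra.single v 1

/-- The affinized Weyl denominator of a root system `Δ` with positive system `Δ⁺`
and rank `r`, as a formal power series in `q = e^{−δ}` with coefficients in `ℤ[V]`,
where `e^v` for `v ∈ V` is evaluated through `emb : V → ℤ[V']`; the infinite product
over the grades `n ≥ 1` is a `tprod` (every factor is `≡ 1 mod q`, so it converges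
in the `q`-adic topology). The positive real roots of the untwisted affine extension
are `α + nδ` (`α ∈ Δ`, `n ≥ 1`, or `α ∈ Δ⁺`, `n = 0`), all of multiplicity one, and
the positive imaginary roots are `nδ` (`n ≥ 1`) of multiplicity `r`. -/
noncomputable def affineDenominator {V V' : Type*} [AddCommGroup V']
    [TopologicalSpace (PowerSeries (AddMonoidAlgebra ℤ V'))]
    (Δ Δpos : Finset V) (r : ℕ) (emb : V → AddMonoidAlgebra ℤ V') :
    PowerSeries (AddMonoidAlgebra ℤ V') :=
  (PowerSeries.C (∏ α ∈ Δpos, (1 - emb α))) *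
    ∏' n : ℕ,
      ((1 - (PowerSeries.X : PowerSeries (AddMonoidAlgebra ℤ V')) ^ (n + 1)) ^ r *
        ∏ α ∈ Δ, (1 - PowerSeries.X ^ (n + 1) * PowerSeries.C (emb α)))

/-!
Since `Δ = Δ⁺ ∪ -Δ⁺` and `Δ⁺ = Δ_a⁺ ⊔ φ(Δ_s⁺)`, the splint also splits all roots:
`Δ = Δ_a ⊔ φ(Δ_s)`. Hence the constant terms of the two sides agree, and so do their grade-`n`
factors: the real-root factors match root by root, and the imaginary ones match because
`(1 - qⁿ)^(r_a + r_s) = (1 - qⁿ)^r (1 - qⁿ)^(r_a + r_s - r)`, where `r ≤ r_a + r_s` as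
`span Δ = span Δ_a + φ(span Δ_s)`. The infinite products may be multiplied factorwise because the
`q`-adic topology on `ℤ[V]⟦q⟧` is the product topology for discrete coefficients, in which the
products of factors `≡ 1 mod q^(n+1)` converge.
-/

open Filter Finset

section RootDecomposition

open scoped Pointwise

variable {V : Type*}

theorem Finset.eq_union_neg_of_forall_mem_or_neg_mem [DecidableEq V] [InvolutiveNeg V]
    {S P : Finset V} (hneg : ∀ x ∈ S, -x ∈ S) (hPS : P ⊆ S)
    (hS : ∀ x ∈ S, x ∈ P ∨ -x ∈ P) : S = P ∪ -P := by
  ext x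
  simp only [mem_union, mem_neg']
  refine ⟨hS x, ?_⟩
  rintro (hx | hx)
  · exact hPS hx
  · simpa using hneg _ (hPS hx)

theorem Finset.disjoint_union_neg_union_neg [DecidableEq V] [InvolutiveNeg V] {A B : Finset V}
    (hAB : Disjoint A B) (hneg : Disjoint (A ∪ B) (-(A ∪ B))) :
    Disjoint (A ∪ -A) (B ∪ -B) := by
  simp only [disjoint_left, mem_union, mem_neg'] at *
  grind

variable [NormedAddCommGroup V] [InnerProductSpace ℝ V]

theorem IsPositiveSystem.mem_or_neg_mem {Δ Δpos : Finset V} (hpos : IsPositiveSystem Δ Δpos)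
    {α : V} (hα : α ∈ Δ) : α ∈ Δpos ∨ -α ∈ Δpos := by
  by_cases h : -α ∈ Δpos
  · exact .inr h
  · exact .inl ((hpos.2.1 α hα).mpr h)

theorem IsPositiveSystem.disjoint_neg [DecidableEq V] {Δ Δpos : Finset V}
    (hpos : IsPositiveSystem Δ Δpos) : Disjoint Δpos (-Δpos) :=
  disjoint_left.mpr fun α hα hα' =>
    (hpos.2.1 α (hpos.1 hα)).mp hα (by simpa using Finset.mem_neg'.mp hα')

theorem IsPositiveSystem.eq_union_neg [DecidableEq V] {Δ Δpos : Finset V} (hΔ : IsRootSystem Δ)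
    (hpos : IsPositiveSystem Δ Δpos) : Δ = Δpos ∪ -Δpos :=
  eq_union_neg_of_forall_mem_or_neg_mem hΔ.neg_mem hpos.1 fun _ => hpos.mem_or_neg_mem

theorem IsPositiveSystem.inter [DecidableEq V] {Δ Δpos Δa : Finset V}
    (hpos : IsPositiveSystem Δ Δpos) (hsub : Δa ⊆ Δ) (hΔa : IsRootSystem Δa) :
    IsPositiveSystem Δa (Δa ∩ Δpos) := by
  refine ⟨inter_subset_left, fun α hα => ?_, fun α hα β hβ hαβ => ?_⟩
  · simp only [mem_inter, hα, hΔa.neg_mem α hα, true_and]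
    exact hpos.2.1 α (hsub hα)
  · rw [mem_inter] at *
    exact ⟨hαβ, hpos.2.2 α hα.2 β hβ.2 (hsub hαβ)⟩

theorem eq_union_image_of_splint [DecidableEq V] {Vs F : Type*} [NormedAddCommGroup Vs]
    [InnerProductSpace ℝ Vs] [FunLike F Vs V] [AddMonoidHomClass F Vs V]
    {Δ Δpos Δa : Finset V} {Δs Δspos : Finset Vs}
    (hΔ : IsRootSystem Δ) (hpos : IsPositiveSystem Δ Δpos) (hsub : Δa ⊆ Δ)
    (hΔa : IsRootSystem Δa) (hΔs : IsRootSystem Δs) (hspos : IsPositiveSystem Δs Δspos)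
    (φ : F) (hposΔ : Δpos = Δa ∩ Δpos ∪ Δspos.image φ)
    (hdisj : Disjoint (Δa ∩ Δpos) (Δspos.image φ)) :
    Δ = Δa ∪ Δs.image φ ∧ Disjoint Δa (Δs.image φ) := by
  classical
  rw [(hpos.inter hsub hΔa).eq_union_neg hΔa, hspos.eq_union_neg hΔs, image_union, image_neg]
  refine ⟨?_, disjoint_union_neg_union_neg hdisj (hposΔ ▸ hpos.disjoint_neg)⟩
  conv_lhs => rw [hpos.eq_union_neg hΔ, hposΔ]
  ext x
  simp only [mem_union, mem_neg']
  tauto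

end RootDecomposition

theorem finrank_span_union_image_le {K V W : Type*} [DivisionRing K] [AddCommGroup V]
    [Module K V] [AddCommGroup W] [Module K W] [DecidableEq V] (s : Finset V) (t : Finset W)
    (f : W →ₗ[K] V) :
    Module.finrank K (Submodule.span K ((s ∪ t.image f : Finset V) : Set V)) ≤
      Module.finrank K (Submodule.span K (s : Set V)) +
        Module.finrank K (Submodule.span K (t : Set W)) := by
  rw [coe_union, Submodule.span_union, coe_image, Submodule.span_image]
  calc _ ≤ _ := Submodule.finrank_add_le_finrank_add_finrank _ _
    _ ≤ _ := Nat.add_le_add_left (Submodule.finrank_map_le f _) _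

namespace PowerSeries

variable {R : Type*} [CommRing R]

theorem mem_span_X_pow_iff_X_pow_dvd {n : ℕ} {f : R⟦X⟧} :
    f ∈ Ideal.span {(X : R⟦X⟧)} ^ n ↔ X ^ n ∣ f := by
  rw [Ideal.span_singleton_pow, Ideal.mem_span_singleton]

open WithPiTopology in
theorem adicTopology_span_X_eq_withPiTopology [TopologicalSpace R] [DiscreteTopology R] :
    (Ideal.span {(X : R⟦X⟧)}).adicTopology = WithPiTopology.instTopologicalSpace R := by
  let I := Ideal.span {(X : R⟦X⟧)}
  let _ := WithPiTopology.instTopologicalSpace R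
  have hadic := I.hasBasis_nhds_zero_adic
  refine IsTopologicalAddGroup.ext (@IsTopologicalRing.to_topologicalAddGroup _ _
    I.adicTopology I.nonarchimedean.toIsTopologicalRing) inferInstance (le_antisymm ?_ ?_)
  · refine (tendsto_iff_coeff_tendsto R _ _ _).mpr fun d => ?_
    rw [map_zero, nhds_discrete R, tendsto_pure, hadic.eventually_iff]
    exact ⟨d + 1, trivial, fun f hf =>
      X_pow_dvd_iff.mp (mem_span_X_pow_iff_X_pow_dvd.mp hf) d d.lt_succ_self⟩
  · refine hadic.ge_iff.mpr fun n _ => ?_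
    have hI : ((I ^ n : Ideal R⟦X⟧) : Set R⟦X⟧) = ⋂ m ∈ range n, coeff m ⁻¹' {0} := by
      ext f
      simp [I, mem_span_X_pow_iff_X_pow_dvd, X_pow_dvd_iff]
    rw [hI, biInter_finset_mem]
    exact fun m _ => ((isOpen_discrete _).preimage (continuous_coeff R m)).mem_nhds (by simp)

open WithPiTopology in
theorem multipliable_of_X_pow_succ_dvd_sub_one [TopologicalSpace R] {f : ℕ → R⟦X⟧}
    (hf : ∀ n, X ^ (n + 1) ∣ f n - 1) : Multipliable f := by
  have h : Tendsto (fun n => (f n - 1).order) atTop (nhds ⊤) := by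
    refine ENat.tendsto_nhds_top_iff_natCast_lt.mpr fun n =>
      eventually_atTop.mpr ⟨n, fun m hm => ?_⟩
    refine lt_of_lt_of_le (b := ((m + 1 : ℕ) : ℕ∞)) (by exact_mod_cast Nat.lt_succ_of_le hm)
      (le_order _ _ fun i hi => ?_)
    exact X_pow_dvd_iff.mp (hf m) i (by exact_mod_cast hi)
  simpa using multipliable_one_add_of_tendsto_order_atTop_nhds_top R h

theorem X_pow_dvd_sub_one_iff {n : ℕ} {f : R⟦X⟧} :
    X ^ n ∣ f - 1 ↔ Ideal.Quotient.mk (Ideal.span {X ^ n}) f = 1 := by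
  rw [← map_one (Ideal.Quotient.mk _), Ideal.Quotient.eq, Ideal.mem_span_singleton]

end PowerSeries

open PowerSeries

section AffineDenominator

variable {V R : Type*} [CommRing R]

noncomputable def affineFactor (Δ : Finset V) (r : ℕ) (emb : V → R) (n : ℕ) : R⟦X⟧ :=
  (1 - X ^ (n + 1)) ^ r * ∏ α ∈ Δ, (1 - X ^ (n + 1) * C (emb α))

theorem X_pow_succ_dvd_affineFactor_sub_one (Δ : Finset V) (r : ℕ) (emb : V → R) (n : ℕ) :
    X ^ (n + 1) ∣ affineFactor Δ r emb n - 1 := by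
  have hX : Ideal.Quotient.mk (Ideal.span {X ^ (n + 1)}) (X ^ (n + 1) : R⟦X⟧) = 0 :=
    Ideal.Quotient.eq_zero_iff_mem.mpr (Ideal.mem_span_singleton_self _)
  simp [X_pow_dvd_sub_one_iff, affineFactor, hX]

theorem affineFactor_union_mul [DecidableEq V] {A B : Finset V} (hAB : Disjoint A B)
    {a b c d : ℕ} (h : a + b = c + d) (emb : V → R) (n : ℕ) :
    affineFactor A a emb n * affineFactor B b emb n =
      affineFactor (A ∪ B) c emb n * (1 - X ^ (n + 1)) ^ d := by
  have hpow : (1 - X ^ (n + 1) : R⟦X⟧) ^ a * (1 - X ^ (n + 1)) ^ b =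
      (1 - X ^ (n + 1)) ^ c * (1 - X ^ (n + 1)) ^ d := by
    rw [← pow_add, ← pow_add, h]
  simp only [affineFactor, prod_union hAB]
  linear_combination (∏ α ∈ A, (1 - X ^ (n + 1) * C (emb α))) *
    (∏ α ∈ B, (1 - X ^ (n + 1) * C (emb α))) * hpow

theorem affineDenominator_eq_mul_tprod_affineFactor {V' : Type*} [AddCommGroup V']
    [TopologicalSpace (AddMonoidAlgebra ℤ V')⟦X⟧] (Δ Δpos : Finset V) (r : ℕ)
    (emb : V → AddMonoidAlgebra ℤ V') :
    affineDenominator Δ Δpos r emb = C (∏ α ∈ Δpos, (1 - emb α)) * ∏' n, affineFactor Δ r emb n :=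
  rfl

theorem affineDenominator_image {W V' : Type*} [AddCommGroup V'] [DecidableEq V]
    [TopologicalSpace (AddMonoidAlgebra ℤ V')⟦X⟧] {f : W → V} (hf : f.Injective)
    (Δ Δpos : Finset W) (r : ℕ) (emb : V → AddMonoidAlgebra ℤ V') :
    affineDenominator (Δ.image f) (Δpos.image f) r emb =
      affineDenominator Δ Δpos r fun x => emb (f x) := by
  simp only [affineDenominator, prod_image hf.injOn]

open WithPiTopology in
theorem affineDenominator_mul_affineDenominator {V' : Type*} [AddCommGroup V']
    [TopologicalSpace (AddMonoidAlgebra ℤ V')] [IsTopologicalRing (AddMonoidAlgebra ℤ V')]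
    [T2Space (AddMonoidAlgebra ℤ V')] [DecidableEq V] {A Apos B Bpos : Finset V}
    (hAB : Disjoint A B) (hpos : Disjoint Apos Bpos) {a b c d : ℕ} (h : a + b = c + d)
    (emb : V → AddMonoidAlgebra ℤ V') :
    affineDenominator A Apos a emb * affineDenominator B Bpos b emb =
      affineDenominator (A ∪ B) (Apos ∪ Bpos) c emb *
        ∏' n, (1 - X ^ (n + 1) : (AddMonoidAlgebra ℤ V')⟦X⟧) ^ d := by
  have hmul (Δ : Finset V) (r : ℕ) : Multipliable (affineFactor Δ r emb) :=
    multipliable_of_X_pow_succ_dvd_sub_one (X_pow_succ_dvd_affineFactor_sub_one Δ r emb)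
  have hq : Multipliable fun n => (1 - X ^ (n + 1) : (AddMonoidAlgebra ℤ V')⟦X⟧) ^ d :=
    multipliable_of_X_pow_succ_dvd_sub_one fun n => by
      simpa [affineFactor] using X_pow_succ_dvd_affineFactor_sub_one ∅ d emb n
  simp only [affineDenominator_eq_mul_tprod_affineFactor, prod_union hpos, map_mul]
  rw [mul_mul_mul_comm, ← (hmul A a).tprod_mul (hmul B b),
    mul_assoc (C _ * C _), ← (hmul _ c).tprod_mul hq]
  simp_rw [affineFactor_union_mul hAB h]

end AffineDenominator

theorem splint_affine_denominator_general
    {V Vs : Type*} [DecidableEq V]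
    [NormedAddCommGroup V] [InnerProductSpace ℝ V]
    [NormedAddCommGroup Vs] [InnerProductSpace ℝ Vs]
    -- the ambient root system `Δ` with positive system `Δ⁺`
    (Δ Δpos : Finset V) (hΔ : IsRootSystem Δ) (hpos : IsPositiveSystem Δ Δpos)
    -- the closed subsystem `Δ_a` with positive system `Δ_a⁺ = Δ_a ∩ Δ⁺`
    (Δa Δapos : Finset V) (hsub : Δa ⊆ Δ)
    (hΔa : IsRootSystem Δa) (hapos : Δapos = Δa ∩ Δpos)
    -- the second stem `Δ_s` with positive system `Δ_s⁺`
    (Δs Δspos : Finset Vs) (hΔs : IsRootSystem Δs) (hspos : IsPositiveSystem Δs Δspos)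
    -- the injective linear embedding `φ` with `φ(Δ_s) ⊆ Δ` and `φ(Δ_s⁺) = Δ⁺ \ Δ_a⁺`
    (φ : Vs →ₗ[ℝ] V) (hφinj : Function.Injective φ)
    (hφpos : Finset.image φ Δspos = Δpos \ Δapos)
    -- the ranks
    (r ra rs : ℕ) (hr : r = rootRank Δ) (hra : ra = rootRank Δa) (hrs : rs = rootRank Δs) :
    letI : TopologicalSpace (PowerSeries (AddMonoidAlgebra ℤ V)) :=
      (Ideal.span {(PowerSeries.X : PowerSeries (AddMonoidAlgebra ℤ V))}).adicTopology
    r ≤ ra + rs ∧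
      affineDenominator Δa Δapos ra (fun α => fexp (-α)) *
          affineDenominator Δs Δspos rs (fun β => fexp (-(φ β))) =
        affineDenominator Δ Δpos r (fun γ => fexp (-γ)) *
          ∏' n : ℕ,
            (1 - (PowerSeries.X : PowerSeries (AddMonoidAlgebra ℤ V)) ^ (n + 1)) ^
              (ra + rs - r) := by
  subst hapos
  have hpos_eq : Δpos = Δa ∩ Δpos ∪ Δspos.image φ := by
    rw [hφpos, union_sdiff_of_subset inter_subset_right]
  have hpos_disj : Disjoint (Δa ∩ Δpos) (Δspos.image φ) := hφpos ▸ disjoint_sdiff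
  obtain ⟨hroots_eq, hroots_disj⟩ :=
    eq_union_image_of_splint hΔ hpos hsub hΔa hΔs hspos φ hpos_eq hpos_disj
  have hrank : r ≤ ra + rs := by
    rw [hr, hra, hrs, rootRank, rootRank, rootRank, hroots_eq]
    exact finrank_span_union_image_le Δa Δs φ
  refine ⟨hrank, ?_⟩
  let _ : TopologicalSpace (AddMonoidAlgebra ℤ V) := ⊥
  have _ : DiscreteTopology (AddMonoidAlgebra ℤ V) := ⟨rfl⟩
  rw [adicTopology_span_X_eq_withPiTopology]
  open WithPiTopology in
  rw [← affineDenominator_image hφinj (emb := fun γ => fexp (-γ)),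
    affineDenominator_mul_affineDenominator hroots_disj hpos_disj (Nat.add_sub_of_le hrank).symm,
    ← hroots_eq, ← hpos_eq]

/-- Under a splint `Δ ≈ (Δ_a, Δ_s)` with `Δ⁺ = Δ_a⁺ ⊔ φ(Δ_s⁺)`, the affinized Weyl
denominators satisfy, in the ring of formal power series in `q` over `ℤ[V]` with its
`q`-adic topology (so that all the infinite products converge):
the product of the affine denominators of `Δ_a` and of `φ(Δ_s)` equals the affine
denominator of `Δ` times `∏_{n≥1} (1−q^n)^{r_a+r_s−r}`, where `r_a, r_s, r` are the
ranks of `Δ_a, Δ_s, Δ` (and `r_a + r_s ≥ r`). -/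
theorem splint_affine_denominator
    {V Vs : Type*} [DecidableEq V]
    [NormedAddCommGroup V] [InnerProductSpace ℝ V] [FiniteDimensional ℝ V]
    [NormedAddCommGroup Vs] [InnerProductSpace ℝ Vs] [FiniteDimensional ℝ Vs]
    -- the ambient root system `Δ` with positive system `Δ⁺`
    (Δ Δpos : Finset V) (hΔ : IsRootSystem Δ) (hpos : IsPositiveSystem Δ Δpos)
    -- the closed subsystem `Δ_a` with positive system `Δ_a⁺ = Δ_a ∩ Δ⁺`
    (Δa Δapos : Finset V) (hsub : Δa ⊆ Δ)
    (hclosed : ∀ γ ∈ Δ, (γ : V) ∈ Submodule.span ℝ (Δa : Set V) → γ ∈ Δa)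
    (hΔa : IsRootSystem Δa) (hapos : Δapos = Δa ∩ Δpos)
    -- the second stem `Δ_s` with positive system `Δ_s⁺`
    (Δs Δspos : Finset Vs) (hΔs : IsRootSystem Δs) (hspos : IsPositiveSystem Δs Δspos)
    -- the injective linear embedding `φ` with `φ(Δ_s) ⊆ Δ` and `φ(Δ_s⁺) = Δ⁺ \ Δ_a⁺`
    (φ : Vs →ₗ[ℝ] V) (hφinj : Function.Injective φ)
    (hφroots : ∀ β ∈ Δs, φ β ∈ Δ)
    (hφpos : Finset.image φ Δspos = Δpos \ Δapos)
    -- the ranks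
    (r ra rs : ℕ) (hr : r = rootRank Δ) (hra : ra = rootRank Δa) (hrs : rs = rootRank Δs) :
    letI : TopologicalSpace (PowerSeries (AddMonoidAlgebra ℤ V)) :=
      (Ideal.span {(PowerSeries.X : PowerSeries (AddMonoidAlgebra ℤ V))}).adicTopology
    r ≤ ra + rs ∧
      affineDenominator Δa Δapos ra (fun α => fexp (-α)) *
          affineDenominator Δs Δspos rs (fun β => fexp (-(φ β))) =
        affineDenominator Δ Δpos r (fun γ => fexp (-γ)) *
          ∏' n : ℕ,
            (1 - (PowerSeries.X : PowerSeries (AddMonoidAlgebra ℤ V)) ^ (n + 1)) ^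
              (ra + rs - r) :=
  splint_affine_denominator_general Δ Δpos hΔ hpos Δa Δapos hsub hΔa hapos Δs Δspos hΔs hspos φ
    hφinj hφpos r ra rs hr hra hrs
end
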